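/- Let n ≥ 1, s ∈ (0,1), p ∈ (1,∞), 0 < r < R, and let 𝒦 be a measurable kernel satisfying the homogeneity and comparability conditions 𝒦(tx)=|t|^{−(n+sp)}𝒦(x) and c⁻¹ ≤ 𝒦(x)|x|^{n+sp} ≤ c. For T ⊆ B_r define cap_𝒦(T, B_R; r) := inf { K(u, B_R) : u ∈ W^{s,p}(ℝⁿ), u = 0 on ℝⁿ \ cl(B_r), ũ ≥ 1 q.e. on T }, where K(u,A) := ∫∫_{A×A} 𝒦(x−y)|u(x)−u(y)|^p dx dy. Then for every ρ ∈ (0, r), sup_{T ⊆ B_ρ} ( cap_𝒦(T) − cap_𝒦(T, B_R; r) ) ≤ C(n,s,p,c) · r^{sp} (R−r)^{−sp} · C_𝒦(B_ρ, B_r), where C_𝒦(B_ρ, B_r) := inf { K(u, ℝⁿ) : u ∈ W^{s,p}(ℝⁿ), u = 0 on ℝⁿ \ cl(B_r), ũ ≥ 1 q.e. on B_ρ }. -/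

import Mathlib

open MeasureTheory ENNReal Metric Set Filter

noncomputable section

abbrev Euc (n : ℕ) := EuclideanSpace ℝ (Fin n)

def gagliardo (n : ℕ) (s p : ℝ) (u : Euc n → ℝ) : ℝ≥0∞ :=
  ∫⁻ z : Euc n × Euc n,
    ENNReal.ofReal (|u z.1 - u z.2| ^ p / ‖z.1 - z.2‖ ^ ((n : ℝ) + s * p))

def memWsp (n : ℕ) (s p : ℝ) (u : Euc n → ℝ) : Prop :=
  MemLp u (ENNReal.ofReal p) volume ∧ gagliardo n s p u < ⊤

/-- Fractional `(s,p)`-capacity (a.e. formulation with open neighborhoods). -/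
def capSP (n : ℕ) (s p : ℝ) (T : Set (Euc n)) : ℝ≥0∞ :=
  sInf {v | ∃ A : Set (Euc n), IsOpen A ∧ T ⊆ A ∧
    ∃ u : Euc n → ℝ, memWsp n s p u ∧ (∀ᵐ x ∂(volume : Measure (Euc n)), x ∈ A → 1 ≤ u x) ∧
      v = gagliardo n s p u}

/-- `u ≥ 1` quasi-everywhere on `T` (up to a set of `(s,p)`-capacity zero). -/
def QEGe1 (n : ℕ) (s p : ℝ) (T : Set (Euc n)) (u : Euc n → ℝ) : Prop :=
  ∃ Ex : Set (Euc n), capSP n s p Ex = 0 ∧ ∀ x ∈ T \ Ex, 1 ≤ u x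

/-- Kernel energy of `u` over `A × A`. -/
def kerEnergy (n : ℕ) (p : ℝ) (K : Euc n → ℝ) (u : Euc n → ℝ) (A : Set (Euc n)) : ℝ≥0∞ :=
  ∫⁻ z in A ×ˢ A, ENNReal.ofReal (K (z.1 - z.2) * |u z.1 - u z.2| ^ p)

/-- Global `𝒦`-capacity of `T` (quasi-everywhere formulation). -/
def capKglobal (n : ℕ) (s p : ℝ) (K : Euc n → ℝ) (T : Set (Euc n)) : ℝ≥0∞ :=
  sInf {v | ∃ u : Euc n → ℝ, memWsp n s p u ∧ QEGe1 n s p T u ∧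
    v = kerEnergy n p K u Set.univ}

/-- Relative capacity `cap_𝒦(T, B_R; r)`: test functions vanish outside `cl(B_r)`,
energy is computed over `B_R × B_R`. -/
def capKrel (n : ℕ) (s p : ℝ) (K : Euc n → ℝ) (T : Set (Euc n)) (R r : ℝ) : ℝ≥0∞ :=
  sInf {v | ∃ u : Euc n → ℝ, memWsp n s p u ∧
    (∀ x ∉ closure (Metric.ball (0 : Euc n) r), u x = 0) ∧ QEGe1 n s p T u ∧
    v = kerEnergy n p K u (Metric.ball (0 : Euc n) R)}

/-- Relative capacity `C_𝒦(T, B_r)`: test functions vanish outside `cl(B_r)`,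
energy over all of `ℝⁿ × ℝⁿ`. -/
def CKrel (n : ℕ) (s p : ℝ) (K : Euc n → ℝ) (T : Set (Euc n)) (r : ℝ) : ℝ≥0∞ :=
  sInf {v | ∃ u : Euc n → ℝ, memWsp n s p u ∧
    (∀ x ∉ closure (Metric.ball (0 : Euc n) r), u x = 0) ∧ QEGe1 n s p T u ∧
    v = kerEnergy n p K u Set.univ}

/-- auxiliary: the base tail integral constant. -/
def Jconst (n : ℕ) (q : ℝ) : ℝ≥0∞ :=
  ∫⁻ z in {z : Euc n | 1 ≤ ‖z‖}, ENNReal.ofReal (‖z‖ ^ (-q))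

lemma Jconst_lt_top (n : ℕ) {q : ℝ} (hq : (n : ℝ) < q) : Jconst n q < ⊤ := by
  have hq0 : 0 < q := lt_of_le_of_lt (Nat.cast_nonneg n) hq
  have hfin : (∫⁻ x : Euc n, ENNReal.ofReal ((1 + ‖x‖) ^ (-q))) < ⊤ := by
    apply finite_integral_one_add_norm
    rwa [finrank_euclideanSpace_fin]
  have hmeas : MeasurableSet {z : Euc n | 1 ≤ ‖z‖} :=
    measurableSet_le measurable_const measurable_norm
  calc Jconst n q
      ≤ ∫⁻ z in {z : Euc n | 1 ≤ ‖z‖},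
          ENNReal.ofReal (2 ^ q) * ENNReal.ofReal ((1 + ‖z‖) ^ (-q)) := by
        apply lintegral_mono_ae
        rw [ae_restrict_iff' hmeas]
        refine ae_of_all _ fun z hz => ?_
        have hz1 : (1 : ℝ) ≤ ‖z‖ := hz
        have h2 : (0:ℝ) < (1 + ‖z‖) / 2 := by positivity
        have h3 : ‖z‖ ^ (-q) ≤ ((1 + ‖z‖) / 2) ^ (-q) :=
          Real.rpow_le_rpow_of_nonpos h2 (by linarith) (neg_nonpos.2 hq0.le)
        have h4 : ((1 + ‖z‖) / 2) ^ (-q) = 2 ^ q * (1 + ‖z‖) ^ (-q) := by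
          rw [Real.div_rpow (by positivity) (by norm_num)]
          rw [div_eq_mul_inv, ← Real.rpow_neg (by norm_num : (0:ℝ) ≤ 2), neg_neg, mul_comm]
        rw [← ENNReal.ofReal_mul (by positivity)]
        exact ENNReal.ofReal_le_ofReal (by rw [← h4]; exact h3)
    _ ≤ ∫⁻ z : Euc n, ENNReal.ofReal (2 ^ q) * ENNReal.ofReal ((1 + ‖z‖) ^ (-q)) :=
        setLIntegral_le_lintegral _ _
    _ = ENNReal.ofReal (2 ^ q) * ∫⁻ z : Euc n, ENNReal.ofReal ((1 + ‖z‖) ^ (-q)) :=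
        lintegral_const_mul _ (by fun_prop)
    _ < ⊤ := ENNReal.mul_lt_top ENNReal.ofReal_lt_top hfin

/-- scaling identity for the tail integral. -/
lemma Idelta (n : ℕ) (q : ℝ) {δ : ℝ} (hδ : 0 < δ) :
    ∫⁻ z in {z : Euc n | δ ≤ ‖z‖}, ENNReal.ofReal (‖z‖ ^ (-q)) =
      ENNReal.ofReal (δ ^ ((n : ℝ) - q)) * Jconst n q := by
  have hmeasf : Measurable fun z : Euc n => ENNReal.ofReal (‖z‖ ^ (-q)) := by fun_prop
  have hs : MeasurableSet {z : Euc n | δ ≤ ‖z‖} :=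
    measurableSet_le measurable_const measurable_norm
  have hmap := Measure.map_addHaar_smul (volume : Measure (Euc n)) (ne_of_gt hδ)
  have hg : Measurable fun x : Euc n => δ • x := by fun_prop
  have h1 := setLIntegral_map (μ := (volume : Measure (Euc n))) hs hmeasf hg
  rw [hmap] at h1
  have hpre : (fun x : Euc n => δ • x) ⁻¹' {z : Euc n | δ ≤ ‖z‖} = {x : Euc n | 1 ≤ ‖x‖} := by
    ext x
    simp only [Set.mem_preimage, Set.mem_setOf_eq, norm_smul, Real.norm_eq_abs,
      abs_of_pos hδ]
    exact le_mul_iff_one_le_right hδ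
  rw [hpre] at h1
  have h2 : ∀ x : Euc n, ENNReal.ofReal (‖δ • x‖ ^ (-q)) =
      ENNReal.ofReal (δ ^ (-q)) * ENNReal.ofReal (‖x‖ ^ (-q)) := by
    intro x
    rw [norm_smul, Real.norm_eq_abs, abs_of_pos hδ,
      Real.mul_rpow hδ.le (norm_nonneg _), ENNReal.ofReal_mul (by positivity)]
  simp only [h2] at h1
  rw [lintegral_const_mul _ hmeasf] at h1
  rw [Measure.restrict_smul, lintegral_smul_measure, smul_eq_mul] at h1
  -- h1 : ofReal |(δ^n)⁻¹| * I = ofReal (δ^(-q)) * J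
  have hd : Module.finrank ℝ (Euc n) = n := finrank_euclideanSpace_fin
  rw [hd] at h1
  have hpow : (0:ℝ) < δ ^ n := pow_pos hδ n
  have := congrArg (fun t => ENNReal.ofReal (δ ^ n) * t) h1
  rw [← mul_assoc, ← mul_assoc, ← ENNReal.ofReal_mul hpow.le, ← ENNReal.ofReal_mul hpow.le] at this
  rw [abs_of_pos (inv_pos.2 hpow), mul_inv_cancel₀ hpow.ne', ENNReal.ofReal_one, one_mul] at this
  rw [this]
  congr 2
  rw [← Real.rpow_natCast δ n, ← Real.rpow_add hδ, sub_eq_add_neg]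

/-- tail estimate. -/
lemma tail_le (n : ℕ) (q : ℝ) {r R : ℝ} (hrR : r < R) (hr : 0 ≤ r) (w : Euc n)
    (hw : ‖w‖ ≤ r) :
    ∫⁻ x in (ball (0 : Euc n) R)ᶜ, ENNReal.ofReal (‖x - w‖ ^ (-q)) ≤
      ENNReal.ofReal ((R - r) ^ ((n : ℝ) - q)) * Jconst n q := by
  set δ := R - r with hδ
  have hδ0 : 0 < δ := sub_pos.2 hrR
  have hsub : (ball (0 : Euc n) R)ᶜ ⊆ {x : Euc n | δ ≤ ‖x - w‖} := by
    intro x hx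
    have hxR : R ≤ ‖x‖ := by
      simpa [mem_ball, dist_zero_right, not_lt] using hx
    have := norm_sub_norm_le x w
    simp only [Set.mem_setOf_eq]
    linarith
  calc ∫⁻ x in (ball (0 : Euc n) R)ᶜ, ENNReal.ofReal (‖x - w‖ ^ (-q))
      ≤ ∫⁻ x in {x : Euc n | δ ≤ ‖x - w‖}, ENNReal.ofReal (‖x - w‖ ^ (-q)) :=
        lintegral_mono_set hsub
    _ = ∫⁻ z in {z : Euc n | δ ≤ ‖z‖}, ENNReal.ofReal (‖z‖ ^ (-q)) := by
        have hmp : MeasurePreserving (fun x : Euc n => x - w) volume volume :=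
          measurePreserving_sub_right volume w
        have hemb : MeasurableEmbedding (fun x : Euc n => x - w) :=
          (MeasurableEquiv.subRight w).measurableEmbedding
        have := hmp.setLIntegral_comp_preimage_emb hemb
          (fun z => ENNReal.ofReal (‖z‖ ^ (-q))) {z : Euc n | δ ≤ ‖z‖}
        exact this
    _ = _ := Idelta n q hδ0

lemma euc_nontrivial (n : ℕ) (hn : 1 ≤ n) : Nontrivial (Euc n) := by
  have : Nonempty (Fin n) := ⟨⟨0, hn⟩⟩
  refine nontrivial_of_ne (EuclideanSpace.single ⟨0, hn⟩ (1:ℝ)) 0 ?_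
  intro h
  have := congrArg (fun v : Euc n => v ⟨0, hn⟩) h
  simp [EuclideanSpace.single_apply] at this

lemma aemeas_fst' {n : ℕ} {u : Euc n → ℝ} (hu : AEMeasurable u (volume : Measure (Euc n))) :
    AEMeasurable (fun z : Euc n × Euc n => u z.1) (volume : Measure (Euc n × Euc n)) := by
  have h : AEMeasurable (fun z : Euc n × Euc n => u z.1)
      ((volume : Measure (Euc n)).prod volume) := hu.comp_quasiMeasurePreserving Measure.quasiMeasurePreserving_fst
  rwa [← Measure.volume_eq_prod] at h

lemma aemeas_snd' {n : ℕ} {u : Euc n → ℝ} (hu : AEMeasurable u (volume : Measure (Euc n))) :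
    AEMeasurable (fun z : Euc n × Euc n => u z.2) (volume : Measure (Euc n × Euc n)) := by
  have h : AEMeasurable (fun z : Euc n × Euc n => u z.2)
      ((volume : Measure (Euc n)).prod volume) := hu.comp_quasiMeasurePreserving Measure.quasiMeasurePreserving_snd
  rwa [← Measure.volume_eq_prod] at h

lemma kerf_aemeas {n : ℕ} (p : ℝ) {K : Euc n → ℝ} (hK : Measurable K)
    {u : Euc n → ℝ} (hu : AEMeasurable u (volume : Measure (Euc n))) :
    AEMeasurable (fun z : Euc n × Euc n => ENNReal.ofReal (K (z.1 - z.2) * |u z.1 - u z.2| ^ p))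
      (volume : Measure (Euc n × Euc n)) := by
  have h1 : AEMeasurable (fun z : Euc n × Euc n => u z.1 - u z.2) volume :=
    (aemeas_fst' hu).sub (aemeas_snd' hu)
  have h2 : Measurable fun z : Euc n × Euc n => K (z.1 - z.2) :=
    hK.comp (measurable_fst.sub measurable_snd)
  have h3 : Measurable fun t : ℝ => |t| ^ p := by fun_prop
  exact (h2.aemeasurable.mul (h3.comp_aemeasurable h1)).ennreal_ofReal

/-- Fractional Poincaré-type inequality. -/
lemma poincare (n : ℕ) (hn : 1 ≤ n) (p c q r : ℝ) (hr : 0 < r) (hc : 0 < c) (hq : 0 < q)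
    (K u : Euc n → ℝ) (hK : Measurable K) (hu : AEMeasurable u (volume : Measure (Euc n)))
    (hlow : ∀ x : Euc n, x ≠ 0 → c⁻¹ ≤ K x * ‖x‖ ^ q)
    (hu0 : ∀ x ∉ closedBall (0 : Euc n) r, u x = 0) :
    (∫⁻ y in closedBall (0 : Euc n) r, ENNReal.ofReal (|u y| ^ p)) *
        (ENNReal.ofReal (((3:ℝ) ^ n - 2 ^ n) * r ^ n) * volume (ball (0 : Euc n) 1)) ≤
      ENNReal.ofReal (c * (4 * r) ^ q) *
        ∫⁻ z in (ball (0 : Euc n) (3 * r) ×ˢ ball (0 : Euc n) (3 * r)),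
          ENNReal.ofReal (K (z.1 - z.2) * |u z.1 - u z.2| ^ p) := by
  haveI : Nontrivial (Euc n) := euc_nontrivial n hn
  set A : Set (Euc n) := ball (0 : Euc n) (3 * r) \ closedBall (0 : Euc n) (2 * r) with hA
  have hAm : MeasurableSet A := measurableSet_ball.diff measurableSet_closedBall
  have hVt : volume (ball (0 : Euc n) 1) < ⊤ := measure_ball_lt_top
  have hvolA : volume A =
      ENNReal.ofReal (((3:ℝ) ^ n - 2 ^ n) * r ^ n) * volume (ball (0 : Euc n) 1) := by
    have h23 : closedBall (0 : Euc n) (2 * r) ⊆ ball (0 : Euc n) (3 * r) :=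
      closedBall_subset_ball (by linarith)
    have hfin : volume (closedBall (0 : Euc n) (2 * r)) ≠ ⊤ := measure_closedBall_lt_top.ne
    rw [hA, measure_diff h23 measurableSet_closedBall.nullMeasurableSet hfin]
    rw [Measure.addHaar_ball _ _ (by positivity : (0:ℝ) ≤ 3 * r),
      Measure.addHaar_closedBall _ _ (by positivity : (0:ℝ) ≤ 2 * r),
      finrank_euclideanSpace_fin]
    rw [← ENNReal.sub_mul (fun _ _ => hVt.ne), ← ENNReal.ofReal_sub _ (by positivity)]
    congr 2
    rw [mul_pow, mul_pow]; ring
  have hf_ae := kerf_aemeas p hK hu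
  -- product identity
  have habs : Measurable fun t : ℝ => ENNReal.ofReal (|t| ^ p) := by fun_prop
  have hprod : (∫⁻ y in closedBall (0 : Euc n) r, ENNReal.ofReal (|u y| ^ p)) * volume A
      = ∫⁻ z in closedBall (0 : Euc n) r ×ˢ A, ENNReal.ofReal (|u z.1| ^ p) := by
    have e1 : (volume : Measure (Euc n × Euc n)).restrict (closedBall (0 : Euc n) r ×ˢ A)
        = ((volume : Measure (Euc n)).restrict (closedBall (0 : Euc n) r)).prod
            (volume.restrict A) := by
      rw [Measure.volume_eq_prod, Measure.prod_restrict]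
    have hgm : AEMeasurable (fun z : Euc n × Euc n => ENNReal.ofReal (|u z.1| ^ p))
        (((volume : Measure (Euc n)).restrict (closedBall (0 : Euc n) r)).prod
          (volume.restrict A)) := by
      rw [Measure.prod_restrict, ← Measure.volume_eq_prod]
      exact (habs.comp_aemeasurable (aemeas_fst' hu)).restrict
    rw [e1, lintegral_prod _ hgm]
    simp only [lintegral_const, Measure.restrict_apply_univ]
    have hmm : AEMeasurable (fun x : Euc n => ENNReal.ofReal (|u x| ^ p))
        ((volume : Measure (Euc n)).restrict (closedBall (0 : Euc n) r)) :=
      (habs.comp_aemeasurable hu).restrict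
    exact (lintegral_mul_const'' _ hmm).symm
  rw [← hvolA, hprod]
  -- pointwise bound
  have hpt : ∀ z ∈ closedBall (0 : Euc n) r ×ˢ A,
      ENNReal.ofReal (|u z.1| ^ p) ≤
        ENNReal.ofReal (c * (4 * r) ^ q) *
          ENNReal.ofReal (K (z.1 - z.2) * |u z.1 - u z.2| ^ p) := by
    rintro ⟨x, y⟩ ⟨hx, hy⟩
    have hxn : ‖x‖ ≤ r := mem_closedBall_zero_iff.1 hx
    have hy3 : ‖y‖ < 3 * r := mem_ball_zero_iff.1 hy.1
    have hy2 : 2 * r < ‖y‖ := by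
      have := hy.2
      simp only [mem_closedBall_zero_iff, not_le] at this
      exact this
    have huy : u y = 0 := hu0 y (by simp only [mem_closedBall_zero_iff, not_le]; linarith)
    have hxy : x - y ≠ 0 := by
      intro h
      rw [sub_eq_zero] at h
      rw [h] at hxn; linarith
    have hnxy0 : 0 < ‖x - y‖ := by simpa [norm_pos_iff] using hxy
    have hnxy : ‖x - y‖ ≤ 4 * r := by
      have := norm_sub_le x y
      linarith
    have hKpos : 0 ≤ K (x - y) := by
      have h1 := hlow _ hxy
      have h2 : (0:ℝ) < ‖x - y‖ ^ q := Real.rpow_pos_of_pos hnxy0 q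
      nlinarith [inv_pos.2 hc]
    have key : 1 ≤ c * (4 * r) ^ q * K (x - y) := by
      have h1 := hlow _ hxy
      have h2 : ‖x - y‖ ^ q ≤ (4 * r) ^ q := Real.rpow_le_rpow hnxy0.le hnxy hq.le
      have h3 : c⁻¹ ≤ K (x - y) * (4 * r) ^ q :=
        h1.trans (mul_le_mul_of_nonneg_left h2 hKpos)
      calc (1:ℝ) = c * c⁻¹ := (mul_inv_cancel₀ hc.ne').symm
        _ ≤ c * (K (x - y) * (4 * r) ^ q) := mul_le_mul_of_nonneg_left h3 hc.le
        _ = c * (4 * r) ^ q * K (x - y) := by ring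
    have habs2 : |u x| ^ p = |u x - u y| ^ p := by rw [huy, sub_zero]
    rw [habs2, ← ENNReal.ofReal_mul (by positivity)]
    apply ENNReal.ofReal_le_ofReal
    have ht : 0 ≤ |u x - u y| ^ p := by positivity
    calc |u x - u y| ^ p = 1 * |u x - u y| ^ p := (one_mul _).symm
      _ ≤ (c * (4 * r) ^ q * K (x - y)) * |u x - u y| ^ p := mul_le_mul_of_nonneg_right key ht
      _ = c * (4 * r) ^ q * (K (x - y) * |u x - u y| ^ p) := by ring
  calc ∫⁻ z in closedBall (0 : Euc n) r ×ˢ A, ENNReal.ofReal (|u z.1| ^ p)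
      ≤ ∫⁻ z in closedBall (0 : Euc n) r ×ˢ A,
          ENNReal.ofReal (c * (4 * r) ^ q) *
            ENNReal.ofReal (K (z.1 - z.2) * |u z.1 - u z.2| ^ p) :=
        lintegral_mono_ae ((ae_restrict_iff' (measurableSet_closedBall.prod hAm)).2
          (ae_of_all _ hpt))
    _ = ENNReal.ofReal (c * (4 * r) ^ q) *
          ∫⁻ z in closedBall (0 : Euc n) r ×ˢ A,
            ENNReal.ofReal (K (z.1 - z.2) * |u z.1 - u z.2| ^ p) :=
        lintegral_const_mul'' _ hf_ae.restrict
    _ ≤ _ := by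
        apply mul_le_mul_right
        apply lintegral_mono_set
        apply Set.prod_mono (closedBall_subset_ball (by linarith)) Set.diff_subset

/-- Main estimate for the exterior part of the energy. -/
lemma rest_le (n : ℕ) (hn : 1 ≤ n) {p c q sp M : ℝ} (hp0 : 0 < p) (hc : 0 < c)
    (hsp0 : 0 < sp) (hq : q = (n : ℝ) + sp) (hM0 : 0 < M)
    (hJle : Jconst n q ≤ ENNReal.ofReal (M * ((3:ℝ) ^ n - 2 ^ n)) * volume (ball (0 : Euc n) 1))
    {K : Euc n → ℝ} (hK : Measurable K)
    (hKcomp : ∀ x : Euc n, x ≠ 0 → c⁻¹ ≤ K x * ‖x‖ ^ q ∧ K x * ‖x‖ ^ q ≤ c)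
    {r R : ℝ} (hr0 : 0 < r) (hR3 : 3 * r < R)
    {u : Euc n → ℝ} (hu : AEMeasurable u (volume : Measure (Euc n)))
    (hu0 : ∀ x ∉ closedBall (0 : Euc n) r, u x = 0) :
    ∫⁻ z in (ball (0 : Euc n) R ×ˢ ball (0 : Euc n) R)ᶜ,
        ENNReal.ofReal (K (z.1 - z.2) * |u z.1 - u z.2| ^ p) ≤
      ENNReal.ofReal ((2 * c ^ 2 * 4 ^ q * M) * r ^ sp / (R - r) ^ sp) *
        ∫⁻ z in ball (0 : Euc n) R ×ˢ ball (0 : Euc n) R,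
          ENNReal.ofReal (K (z.1 - z.2) * |u z.1 - u z.2| ^ p) := by
  haveI : Nontrivial (Euc n) := euc_nontrivial n hn
  have hrR : r < R := by linarith
  have hδ0 : (0:ℝ) < R - r := by linarith
  have hq0 : 0 < q := by
    have : (0:ℝ) ≤ (n:ℝ) := Nat.cast_nonneg n
    rw [hq]; linarith
  set W : ℝ := (3:ℝ) ^ n - 2 ^ n with hW_def
  have hW : 0 < W := by
    rw [hW_def]
    have : (2:ℝ) ^ n < 3 ^ n := by
      apply pow_lt_pow_left₀ (by norm_num) (by norm_num)
      omega
    linarith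
  set V := volume (ball (0 : Euc n) 1) with hV_def
  have hV0 : V ≠ 0 := (measure_ball_pos _ _ one_pos).ne'
  have hVt : V ≠ ⊤ := measure_ball_lt_top.ne
  set Q : Set (Euc n × Euc n) := ball (0 : Euc n) R ×ˢ ball (0 : Euc n) R with hQ_def
  have hQm : MeasurableSet Q := measurableSet_ball.prod measurableSet_ball
  set f : Euc n × Euc n → ℝ≥0∞ :=
    fun z => ENNReal.ofReal (K (z.1 - z.2) * |u z.1 - u z.2| ^ p) with hf_def
  have hf_ae : AEMeasurable f (volume : Measure (Euc n × Euc n)) := kerf_aemeas p hK hu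
  set EQ := ∫⁻ z in Q, f z with hEQ_def
  set P := ∫⁻ y in closedBall (0 : Euc n) r, ENNReal.ofReal (|u y| ^ p) with hP_def
  set S1 : Set (Euc n × Euc n) := (ball (0 : Euc n) R)ᶜ ×ˢ closedBall (0 : Euc n) r with hS1_def
  set S2 : Set (Euc n × Euc n) := closedBall (0 : Euc n) r ×ˢ (ball (0 : Euc n) R)ᶜ with hS2_def
  have hS1m : MeasurableSet S1 := measurableSet_ball.compl.prod measurableSet_closedBall
  have hS2m : MeasurableSet S2 := measurableSet_closedBall.prod measurableSet_ball.compl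
  set g1 : Euc n × Euc n → ℝ≥0∞ := fun z =>
    ENNReal.ofReal c * ENNReal.ofReal (‖z.1 - z.2‖ ^ (-q)) * ENNReal.ofReal (|u z.2| ^ p)
    with hg1_def
  set g2 : Euc n × Euc n → ℝ≥0∞ := fun z =>
    ENNReal.ofReal c * ENNReal.ofReal (‖z.1 - z.2‖ ^ (-q)) * ENNReal.ofReal (|u z.1| ^ p)
    with hg2_def
  have habs : Measurable fun t : ℝ => ENNReal.ofReal (|t| ^ p) := by fun_prop
  have hg1ae : AEMeasurable g1 (volume : Measure (Euc n × Euc n)) := by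
    have h2 : Measurable fun z : Euc n × Euc n => ENNReal.ofReal (‖z.1 - z.2‖ ^ (-q)) := by
      fun_prop
    exact (aemeasurable_const.mul h2.aemeasurable).mul (habs.comp_aemeasurable (aemeas_snd' hu))
  have hg2ae : AEMeasurable g2 (volume : Measure (Euc n × Euc n)) := by
    have h2 : Measurable fun z : Euc n × Euc n => ENNReal.ofReal (‖z.1 - z.2‖ ^ (-q)) := by
      fun_prop
    exact (aemeasurable_const.mul h2.aemeasurable).mul (habs.comp_aemeasurable (aemeas_fst' hu))
  -- pointwise kernel bound
  have hbound : ∀ (x y : Euc n) (a : ℝ), x ≠ y →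
      ENNReal.ofReal (K (x - y) * |a| ^ p) ≤
        ENNReal.ofReal c * ENNReal.ofReal (‖x - y‖ ^ (-q)) * ENNReal.ofReal (|a| ^ p) := by
    intro x y a hxy
    have hne : x - y ≠ 0 := sub_ne_zero.2 hxy
    have hpos : 0 < ‖x - y‖ := by simpa [norm_pos_iff] using hne
    have hup := (hKcomp _ hne).2
    have hq' : (0:ℝ) < ‖x - y‖ ^ q := Real.rpow_pos_of_pos hpos q
    have hKle : K (x - y) ≤ c * ‖x - y‖ ^ (-q) := by
      rw [Real.rpow_neg hpos.le, ← div_eq_mul_inv, le_div_iff₀ hq']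
      exact hup
    calc ENNReal.ofReal (K (x - y) * |a| ^ p)
        ≤ ENNReal.ofReal (c * ‖x - y‖ ^ (-q) * |a| ^ p) :=
          ENNReal.ofReal_le_ofReal (mul_le_mul_of_nonneg_right hKle (by positivity))
      _ = _ := by
          rw [ENNReal.ofReal_mul (by positivity), ENNReal.ofReal_mul hc.le]
  -- pointwise exterior bound
  have hfg : ∀ z ∈ Qᶜ, f z ≤ S1.indicator g1 z + S2.indicator g2 z := by
    rintro ⟨x, y⟩ hz
    have hcb : closedBall (0 : Euc n) r ⊆ ball (0 : Euc n) R := closedBall_subset_ball hrR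
    by_cases hx : x ∈ closedBall (0 : Euc n) r
    · by_cases hy : y ∈ closedBall (0 : Euc n) r
      · exact absurd (Set.mk_mem_prod (hcb hx) (hcb hy)) hz
      · have huy : u y = 0 := hu0 y hy
        have hyR : y ∉ ball (0 : Euc n) R := by
          intro hyR
          by_cases hxR : x ∈ ball (0 : Euc n) R
          · exact hz (Set.mk_mem_prod hxR hyR)
          · exact hxR (hcb hx)
        have hxyne : x ≠ y := fun h => hy (h ▸ hx)
        have hfz : f (x, y) = ENNReal.ofReal (K (x - y) * |u x| ^ p) := by
          simp [hf_def, huy]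
        calc f (x, y) ≤ S2.indicator g2 (x, y) := by
              rw [Set.indicator_of_mem (show (x, y) ∈ S2 from Set.mk_mem_prod hx hyR)]
              rw [hfz]
              exact hbound x y (u x) hxyne
          _ ≤ _ := self_le_add_left _ _
    · have hux : u x = 0 := hu0 x hx
      by_cases hy : y ∈ closedBall (0 : Euc n) r
      · have hxR : x ∉ ball (0 : Euc n) R := by
          intro hxR
          by_cases hyR : y ∈ ball (0 : Euc n) R
          · exact hz (Set.mk_mem_prod hxR hyR)
          · exact hyR (hcb hy)
        have hxyne : x ≠ y := fun h => hx (h ▸ hy)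
        have hfz : f (x, y) = ENNReal.ofReal (K (x - y) * |u y| ^ p) := by
          simp [hf_def, hux]
        calc f (x, y) ≤ S1.indicator g1 (x, y) := by
              rw [Set.indicator_of_mem (show (x, y) ∈ S1 from Set.mk_mem_prod hxR hy)]
              rw [hfz]
              exact hbound x y (u y) hxyne
          _ ≤ _ := self_le_add_right _ _
      · have huy : u y = 0 := hu0 y hy
        have hfz : f (x, y) = 0 := by
          simp [hf_def, hux, huy, Real.zero_rpow hp0.ne']
        simp [hfz]
  -- tail constant
  set CC : ℝ≥0∞ := ENNReal.ofReal c *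
      (ENNReal.ofReal ((R - r) ^ ((n : ℝ) - q)) * Jconst n q) with hCC_def
  -- Term 1
  have hT1 : (∫⁻ z in S1, g1 z) ≤ P * CC := by
    have e1 : (volume : Measure (Euc n × Euc n)).restrict S1
        = ((volume : Measure (Euc n)).restrict (ball (0 : Euc n) R)ᶜ).prod
            ((volume : Measure (Euc n)).restrict (closedBall (0 : Euc n) r)) := by
      rw [hS1_def, Measure.volume_eq_prod, Measure.prod_restrict]
    have hg1' : AEMeasurable g1
        (((volume : Measure (Euc n)).restrict (ball (0 : Euc n) R)ᶜ).prod
          ((volume : Measure (Euc n)).restrict (closedBall (0 : Euc n) r))) := by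
      rw [Measure.prod_restrict, ← Measure.volume_eq_prod]
      exact hg1ae.restrict
    rw [e1, lintegral_prod_symm _ hg1']
    have hinner : ∀ y ∈ closedBall (0 : Euc n) r,
        (∫⁻ x in (ball (0 : Euc n) R)ᶜ, g1 (x, y)) ≤
          ENNReal.ofReal (|u y| ^ p) * CC := by
      intro y hy
      have hyr : ‖y‖ ≤ r := mem_closedBall_zero_iff.1 hy
      have e2 : ∀ x : Euc n, g1 (x, y) =
          (ENNReal.ofReal c * ENNReal.ofReal (|u y| ^ p)) *
            ENNReal.ofReal (‖x - y‖ ^ (-q)) := by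
        intro x; rw [hg1_def]; ring
      simp only [e2]
      rw [lintegral_const_mul _ (by fun_prop)]
      calc (ENNReal.ofReal c * ENNReal.ofReal (|u y| ^ p)) *
            ∫⁻ x in (ball (0 : Euc n) R)ᶜ, ENNReal.ofReal (‖x - y‖ ^ (-q))
          ≤ (ENNReal.ofReal c * ENNReal.ofReal (|u y| ^ p)) *
            (ENNReal.ofReal ((R - r) ^ ((n : ℝ) - q)) * Jconst n q) :=
            mul_le_mul_right (tail_le n q hrR hr0.le y hyr) _
        _ = ENNReal.ofReal (|u y| ^ p) * CC := by rw [hCC_def]; ring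
    calc (∫⁻ y in closedBall (0 : Euc n) r, ∫⁻ x in (ball (0 : Euc n) R)ᶜ, g1 (x, y))
        ≤ ∫⁻ y in closedBall (0 : Euc n) r, ENNReal.ofReal (|u y| ^ p) * CC :=
          lintegral_mono_ae ((ae_restrict_iff' measurableSet_closedBall).2
            (ae_of_all _ hinner))
      _ = P * CC := by
          rw [hP_def]
          exact lintegral_mul_const'' _ ((habs.comp_aemeasurable hu).restrict)
  -- Term 2
  have hT2 : (∫⁻ z in S2, g2 z) ≤ P * CC := by
    have e1 : (volume : Measure (Euc n × Euc n)).restrict S2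
        = ((volume : Measure (Euc n)).restrict (closedBall (0 : Euc n) r)).prod
            ((volume : Measure (Euc n)).restrict (ball (0 : Euc n) R)ᶜ) := by
      rw [hS2_def, Measure.volume_eq_prod, Measure.prod_restrict]
    have hg2' : AEMeasurable g2
        (((volume : Measure (Euc n)).restrict (closedBall (0 : Euc n) r)).prod
          ((volume : Measure (Euc n)).restrict (ball (0 : Euc n) R)ᶜ)) := by
      rw [Measure.prod_restrict, ← Measure.volume_eq_prod]
      exact hg2ae.restrict
    rw [e1, lintegral_prod _ hg2']
    have hinner : ∀ x ∈ closedBall (0 : Euc n) r,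
        (∫⁻ y in (ball (0 : Euc n) R)ᶜ, g2 (x, y)) ≤
          ENNReal.ofReal (|u x| ^ p) * CC := by
      intro x hx
      have hxr : ‖x‖ ≤ r := mem_closedBall_zero_iff.1 hx
      have e2 : ∀ y : Euc n, g2 (x, y) =
          (ENNReal.ofReal c * ENNReal.ofReal (|u x| ^ p)) *
            ENNReal.ofReal (‖y - x‖ ^ (-q)) := by
        intro y; rw [hg2_def]; simp only; rw [norm_sub_rev]; ring
      simp only [e2]
      rw [lintegral_const_mul _ (by fun_prop)]
      calc (ENNReal.ofReal c * ENNReal.ofReal (|u x| ^ p)) *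
            ∫⁻ y in (ball (0 : Euc n) R)ᶜ, ENNReal.ofReal (‖y - x‖ ^ (-q))
          ≤ (ENNReal.ofReal c * ENNReal.ofReal (|u x| ^ p)) *
            (ENNReal.ofReal ((R - r) ^ ((n : ℝ) - q)) * Jconst n q) :=
            mul_le_mul_right (tail_le n q hrR hr0.le x hxr) _
        _ = ENNReal.ofReal (|u x| ^ p) * CC := by rw [hCC_def]; ring
    calc (∫⁻ x in closedBall (0 : Euc n) r, ∫⁻ y in (ball (0 : Euc n) R)ᶜ, g2 (x, y))
        ≤ ∫⁻ x in closedBall (0 : Euc n) r, ENNReal.ofReal (|u x| ^ p) * CC :=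
          lintegral_mono_ae ((ae_restrict_iff' measurableSet_closedBall).2
            (ae_of_all _ hinner))
      _ = P * CC := by
          rw [hP_def]
          exact lintegral_mul_const'' _ ((habs.comp_aemeasurable hu).restrict)
  -- exterior integral bound
  have hrest : (∫⁻ z in Qᶜ, f z) ≤ P * CC + P * CC := by
    calc (∫⁻ z in Qᶜ, f z)
        ≤ ∫⁻ z in Qᶜ, (S1.indicator g1 z + S2.indicator g2 z) :=
          lintegral_mono_ae ((ae_restrict_iff' hQm.compl).2 (ae_of_all _ hfg))
      _ ≤ ∫⁻ z, (S1.indicator g1 z + S2.indicator g2 z) := setLIntegral_le_lintegral _ _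
      _ = (∫⁻ z, S1.indicator g1 z) + ∫⁻ z, S2.indicator g2 z :=
          lintegral_add_left' (hg1ae.indicator hS1m) _
      _ = (∫⁻ z in S1, g1 z) + ∫⁻ z in S2, g2 z := by
          rw [lintegral_indicator hS1m, lintegral_indicator hS2m]
      _ ≤ P * CC + P * CC := add_le_add hT1 hT2
  -- Poincaré inequality
  have hpoin : P * (ENNReal.ofReal (W * r ^ n) * V) ≤
      ENNReal.ofReal (c * (4 * r) ^ q) * EQ := by
    have h1 := poincare n hn p c q r hr0 hc hq0 K u hK hu
      (fun x hx => (hKcomp x hx).1) hu0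
    refine h1.trans ?_
    apply mul_le_mul_right
    rw [hEQ_def]
    apply lintegral_mono_set
    exact Set.prod_mono (ball_subset_ball (by linarith)) (ball_subset_ball (by linarith))
  -- combine
  set m : ℝ≥0∞ := ENNReal.ofReal (W * r ^ n) * V with hm_def
  have hm0 : m ≠ 0 := by
    rw [hm_def]
    apply mul_ne_zero _ hV0
    simp only [ne_eq, ENNReal.ofReal_eq_zero, not_le]
    positivity
  have hmt : m ≠ ⊤ := by
    rw [hm_def]
    exact ENNReal.mul_ne_top ENNReal.ofReal_ne_top hVt
  set D : ℝ≥0∞ := ENNReal.ofReal c *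
      (ENNReal.ofReal ((R - r) ^ ((n : ℝ) - q)) * (ENNReal.ofReal (M * W) * V)) with hD_def
  have hCCD : CC ≤ D := by
    rw [hCC_def, hD_def]
    exact mul_le_mul_right (mul_le_mul_right hJle _) _
  have hrest2 : (∫⁻ z in Qᶜ, f z) * m ≤
      (ENNReal.ofReal (c * (4 * r) ^ q) * EQ) * (2 * D) := by
    calc (∫⁻ z in Qᶜ, f z) * m ≤ (P * CC + P * CC) * m := mul_le_mul_left hrest m
      _ = (P * m) * (2 * CC) := by ring
      _ ≤ (ENNReal.ofReal (c * (4 * r) ^ q) * EQ) * (2 * CC) := mul_le_mul_left hpoin _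
      _ ≤ _ := mul_le_mul_right (mul_le_mul_right hCCD _) _
  have hdiv : (∫⁻ z in Qᶜ, f z) ≤
      ((ENNReal.ofReal (c * (4 * r) ^ q) * EQ) * (2 * D)) / m :=
    (ENNReal.le_div_iff_mul_le (Or.inl hm0) (Or.inl hmt)).2 hrest2
  refine hdiv.trans ?_
  rw [ENNReal.div_le_iff_le_mul (Or.inl hm0) (Or.inl hmt)]
  -- rearrange to constants times EQ
  have hconst : (ENNReal.ofReal (c * (4 * r) ^ q)) * (2 * D) ≤
      (ENNReal.ofReal ((2 * c ^ 2 * 4 ^ q * M) * r ^ sp / (R - r) ^ sp)) * m := by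
    rw [hD_def, hm_def]
    have h2 : (2 : ℝ≥0∞) = ENNReal.ofReal 2 := by simp
    rw [h2]
    rw [show ENNReal.ofReal (c * (4 * r) ^ q) *
        (ENNReal.ofReal 2 * (ENNReal.ofReal c *
          (ENNReal.ofReal ((R - r) ^ ((n : ℝ) - q)) * (ENNReal.ofReal (M * W) * V)))) =
        (ENNReal.ofReal (c * (4 * r) ^ q) * ENNReal.ofReal 2 * ENNReal.ofReal c *
          ENNReal.ofReal ((R - r) ^ ((n : ℝ) - q)) * ENNReal.ofReal (M * W)) * V from by ring]
    rw [show ENNReal.ofReal ((2 * c ^ 2 * 4 ^ q * M) * r ^ sp / (R - r) ^ sp) *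
        (ENNReal.ofReal (W * r ^ n) * V) =
        (ENNReal.ofReal ((2 * c ^ 2 * 4 ^ q * M) * r ^ sp / (R - r) ^ sp) *
          ENNReal.ofReal (W * r ^ n)) * V from by ring]
    apply mul_le_mul_left
    rw [← ENNReal.ofReal_mul (by positivity), ← ENNReal.ofReal_mul (by positivity),
      ← ENNReal.ofReal_mul (by positivity), ← ENNReal.ofReal_mul (by positivity),
      ← ENNReal.ofReal_mul (by positivity)]
    apply ENNReal.ofReal_le_ofReal
    have e4r : (4 * r) ^ q = 4 ^ q * r ^ q := Real.mul_rpow (by norm_num) hr0.le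
    have erq : r ^ q = r ^ (n : ℕ) * r ^ sp := by
      rw [hq, Real.rpow_add hr0, Real.rpow_natCast]
    have eδ : (R - r) ^ ((n : ℝ) - q) = ((R - r) ^ sp)⁻¹ := by
      have : (n : ℝ) - q = -sp := by rw [hq]; ring
      rw [this, Real.rpow_neg hδ0.le]
    rw [e4r, erq, eδ]
    rw [div_eq_mul_inv]
    apply le_of_eq
    ring
  calc (ENNReal.ofReal (c * (4 * r) ^ q) * EQ) * (2 * D)
      = (ENNReal.ofReal (c * (4 * r) ^ q) * (2 * D)) * EQ := by ring
    _ ≤ ((ENNReal.ofReal ((2 * c ^ 2 * 4 ^ q * M) * r ^ sp / (R - r) ^ sp)) * m) * EQ :=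
        mul_le_mul_left hconst _
    _ = (ENNReal.ofReal ((2 * c ^ 2 * 4 ^ q * M) * r ^ sp / (R - r) ^ sp) * EQ) * m := by
        ring
/-- for every `ρ ∈ (0,r)` and every `T ⊆ B_ρ`,
`cap_𝒦(T) - cap_𝒦(T, B_R; r) ≤ C(n,s,p,c) · r^{sp}(R-r)^{-sp} · C_𝒦(B_ρ, B_r)`. -/
theorem capK_global_le_rel
    (n : ℕ) (hn : 1 ≤ n) (s p c : ℝ) (hs : s ∈ Set.Ioo (0:ℝ) 1) (hp : 1 < p)
    (hsp : s * p < n) (hc : 0 < c) :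
    ∃ C : ℝ, 0 < C ∧
      ∀ K : Euc n → ℝ, Measurable K → (∀ x : Euc n, x ≠ 0 → 0 ≤ K x) →
      (∀ t : ℝ, t ≠ 0 → ∀ x : Euc n, x ≠ 0 →
        K (t • x) = |t| ^ (-((n : ℝ) + s * p)) * K x) →
      (∀ x : Euc n, x ≠ 0 →
        c⁻¹ ≤ K x * ‖x‖ ^ ((n : ℝ) + s * p) ∧ K x * ‖x‖ ^ ((n : ℝ) + s * p) ≤ c) →
      ∀ ρ r R : ℝ, 0 < ρ → ρ < r → r < R →
      ∀ T : Set (Euc n), T ⊆ Metric.ball (0 : Euc n) ρ →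
        capKglobal n s p K T ≤ capKrel n s p K T R r +
          ENNReal.ofReal (C * r ^ (s * p) / (R - r) ^ (s * p)) *
            CKrel n s p K (Metric.ball (0 : Euc n) ρ) r := by
  obtain ⟨hs0, hs1⟩ := hs
  have hp0 : (0:ℝ) < p := lt_trans one_pos hp
  have hsp0 : 0 < s * p := mul_pos hs0 hp0
  set q : ℝ := (n : ℝ) + s * p with hq_def
  have hqn : (n : ℝ) < q := by rw [hq_def]; linarith
  set W : ℝ := (3:ℝ) ^ n - 2 ^ n with hW_def
  have hW : 0 < W := by
    rw [hW_def]
    have : (2:ℝ) ^ n < 3 ^ n := by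
      apply pow_lt_pow_left₀ (by norm_num) (by norm_num)
      omega
    linarith
  set V := volume (ball (0 : Euc n) 1) with hV_def
  have hV0 : V ≠ 0 := (measure_ball_pos _ _ one_pos).ne'
  have hVt : V ≠ ⊤ := measure_ball_lt_top.ne
  have hd0 : ENNReal.ofReal W * V ≠ 0 := by
    apply mul_ne_zero _ hV0
    simp only [ne_eq, ENNReal.ofReal_eq_zero, not_le]
    exact hW
  have hdt : ENNReal.ofReal W * V ≠ ⊤ := ENNReal.mul_ne_top ENNReal.ofReal_ne_top hVt
  set M : ℝ := (Jconst n q / (ENNReal.ofReal W * V)).toReal + 1 with hM_def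
  have hM0 : 0 < M := by
    rw [hM_def]
    have := ENNReal.toReal_nonneg (a := Jconst n q / (ENNReal.ofReal W * V))
    linarith
  have hJle : Jconst n q ≤ ENNReal.ofReal (M * W) * V := by
    have hfin : Jconst n q / (ENNReal.ofReal W * V) ≠ ⊤ :=
      (ENNReal.div_lt_top (Jconst_lt_top n hqn).ne hd0).ne
    have h1 : Jconst n q / (ENNReal.ofReal W * V) ≤ ENNReal.ofReal M := by
      rw [← ENNReal.ofReal_toReal hfin]
      apply ENNReal.ofReal_le_ofReal
      rw [hM_def]; linarith
    calc Jconst n q = (Jconst n q / (ENNReal.ofReal W * V)) * (ENNReal.ofReal W * V) :=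
          (ENNReal.div_mul_cancel hd0 hdt).symm
      _ ≤ ENNReal.ofReal M * (ENNReal.ofReal W * V) := mul_le_mul_left h1 _
      _ = ENNReal.ofReal (M * W) * V := by
          rw [← mul_assoc, ← ENNReal.ofReal_mul hM0.le]
  have h2sp : (0:ℝ) < 2 ^ (s * p) := Real.rpow_pos_of_pos (by norm_num) _
  have h4q : (0:ℝ) < 4 ^ q := Real.rpow_pos_of_pos (by norm_num) _
  refine ⟨2 * c ^ 2 * 4 ^ q * M + 2 ^ (s * p), by positivity, ?_⟩
  intro K hKmeas hKnn hKhom hKcomp ρ r R hρ hρr hrR T hT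
  set C : ℝ := 2 * c ^ 2 * 4 ^ q * M + 2 ^ (s * p) with hC_def
  have hr0 : 0 < r := hρ.trans hρr
  have hδ0 : (0:ℝ) < R - r := sub_pos.2 hrR
  have hδsp : (0:ℝ) < (R - r) ^ (s * p) := Real.rpow_pos_of_pos hδ0 _
  have qe_mono : ∀ u : Euc n → ℝ, QEGe1 n s p (ball (0 : Euc n) ρ) u → QEGe1 n s p T u := by
    rintro u ⟨Ex, hEx, hge⟩
    exact ⟨Ex, hEx, fun x hx => hge x ⟨hT hx.1, hx.2⟩⟩
  have hrelle : capKrel n s p K T R r ≤ CKrel n s p K (ball (0 : Euc n) ρ) r := by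
    refine le_sInf ?_
    rintro v ⟨w, hw1, hw2, hw3, rfl⟩
    refine sInf_le_of_le ⟨w, hw1, hw2, qe_mono w hw3, rfl⟩ ?_
    simp only [kerEnergy]
    rw [Set.univ_prod_univ]
    exact lintegral_mono_set (subset_univ _)
  have hglob_le_CK : capKglobal n s p K T ≤ CKrel n s p K (ball (0 : Euc n) ρ) r := by
    refine le_sInf ?_
    rintro v ⟨w, hw1, hw2, hw3, rfl⟩
    exact sInf_le ⟨w, hw1, qe_mono w hw3, rfl⟩
  set coeff := ENNReal.ofReal (C * r ^ (s * p) / (R - r) ^ (s * p)) with hcoeff_def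
  rcases le_or_gt 1 (C * r ^ (s * p) / (R - r) ^ (s * p)) with hcase | hcase
  · have h1 : (1 : ℝ≥0∞) ≤ coeff := by
      rw [hcoeff_def, ← ENNReal.ofReal_one]
      exact ENNReal.ofReal_le_ofReal hcase
    calc capKglobal n s p K T ≤ CKrel n s p K (ball (0 : Euc n) ρ) r := hglob_le_CK
      _ = 1 * CKrel n s p K (ball (0 : Euc n) ρ) r := (one_mul _).symm
      _ ≤ coeff * CKrel n s p K (ball (0 : Euc n) ρ) r := mul_le_mul_left h1 _
      _ ≤ _ := self_le_add_left _ _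
  · have hCr : C * r ^ (s * p) < (R - r) ^ (s * p) := (div_lt_one hδsp).1 hcase
    have h2r : (2 * r) ^ (s * p) ≤ C * r ^ (s * p) := by
      rw [Real.mul_rpow (by norm_num) hr0.le]
      apply mul_le_mul_of_nonneg_right _ (Real.rpow_nonneg hr0.le _)
      rw [hC_def]
      have : (0:ℝ) < 2 * c ^ 2 * 4 ^ q * M := by positivity
      linarith
    have hR3 : 3 * r < R := by
      have hlt : (2 * r) ^ (s * p) < (R - r) ^ (s * p) := lt_of_le_of_lt h2r hCr
      have h2rδ : 2 * r < R - r := by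
        by_contra hcon
        push_neg at hcon
        exact absurd (Real.rpow_le_rpow hδ0.le hcon hsp0.le) (not_le.2 hlt)
      linarith
    have hcoeff_le_one : coeff ≤ 1 := by
      rw [hcoeff_def, ← ENNReal.ofReal_one]
      exact ENNReal.ofReal_le_ofReal hcase.le
    have key : ∀ u : Euc n → ℝ, memWsp n s p u →
        (∀ x ∉ closure (ball (0 : Euc n) r), u x = 0) →
        kerEnergy n p K u Set.univ ≤
          kerEnergy n p K u (ball (0 : Euc n) R) +
            coeff * kerEnergy n p K u (ball (0 : Euc n) R) := by
      intro u hmem hu0'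
      have hu : AEMeasurable u (volume : Measure (Euc n)) :=
        hmem.1.aestronglyMeasurable.aemeasurable
      have hu0 : ∀ x ∉ closedBall (0 : Euc n) r, u x = 0 := by
        intro x hx
        apply hu0' x
        rwa [closure_ball (0 : Euc n) hr0.ne']
      have hQm : MeasurableSet (ball (0 : Euc n) R ×ˢ ball (0 : Euc n) R) :=
        measurableSet_ball.prod measurableSet_ball
      have hsplit : kerEnergy n p K u Set.univ =
          kerEnergy n p K u (ball (0 : Euc n) R) +
            ∫⁻ z in (ball (0 : Euc n) R ×ˢ ball (0 : Euc n) R)ᶜ,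
              ENNReal.ofReal (K (z.1 - z.2) * |u z.1 - u z.2| ^ p) := by
        simp only [kerEnergy]
        rw [Set.univ_prod_univ, Measure.restrict_univ,
          ← lintegral_add_compl (fun z : Euc n × Euc n =>
            ENNReal.ofReal (K (z.1 - z.2) * |u z.1 - u z.2| ^ p)) hQm]
      rw [hsplit]
      apply add_le_add_right
      have hrest := rest_le n hn hp0 hc hsp0 hq_def hM0 hJle hKmeas hKcomp hr0 hR3 hu hu0
      refine hrest.trans ?_
      apply mul_le_mul_left
      rw [hcoeff_def]
      apply ENNReal.ofReal_le_ofReal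
      have hle : 2 * c ^ 2 * 4 ^ q * M ≤ C := by
        rw [hC_def]; linarith
      gcongr
    refine ENNReal.le_of_forall_pos_le_add ?_
    intro ε hε hRHS
    have hcaprel_fin : capKrel n s p K T R r ≠ ⊤ := (lt_of_le_of_lt le_self_add hRHS).ne
    have hhalf : ((ε : ℝ≥0∞) / 2) ≠ 0 := by
      simp [ENNReal.div_eq_zero_iff, hε.ne']
    have h0 : capKrel n s p K T R r < capKrel n s p K T R r + (ε : ℝ≥0∞) / 2 :=
      ENNReal.lt_add_right hcaprel_fin hhalf
    unfold capKrel at h0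
    obtain ⟨v, hvmem, hvlt⟩ := sInf_lt_iff.1 h0
    obtain ⟨u, hu1, hu2, hu3, rfl⟩ := hvmem
    have hvlt' : kerEnergy n p K u (ball (0 : Euc n) R) <
        capKrel n s p K T R r + (ε : ℝ≥0∞) / 2 := hvlt
    calc capKglobal n s p K T ≤ kerEnergy n p K u Set.univ := sInf_le ⟨u, hu1, hu3, rfl⟩
      _ ≤ kerEnergy n p K u (ball (0 : Euc n) R) +
            coeff * kerEnergy n p K u (ball (0 : Euc n) R) := key u hu1 hu2
      _ ≤ (capKrel n s p K T R r + (ε : ℝ≥0∞) / 2) +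
            coeff * (capKrel n s p K T R r + (ε : ℝ≥0∞) / 2) :=
          add_le_add hvlt'.le (mul_le_mul_right hvlt'.le _)
      _ = (capKrel n s p K T R r + (ε : ℝ≥0∞) / 2) +
            (coeff * capKrel n s p K T R r + coeff * ((ε : ℝ≥0∞) / 2)) := by rw [mul_add]
      _ ≤ (capKrel n s p K T R r + (ε : ℝ≥0∞) / 2) +
            (coeff * CKrel n s p K (ball (0 : Euc n) ρ) r + 1 * ((ε : ℝ≥0∞) / 2)) :=
          add_le_add_right (add_le_add (mul_le_mul_right hrelle _)
            (mul_le_mul_left hcoeff_le_one _)) _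
      _ = (capKrel n s p K T R r + coeff * CKrel n s p K (ball (0 : Euc n) ρ) r) +
            ((ε : ℝ≥0∞) / 2 + (ε : ℝ≥0∞) / 2) := by rw [one_mul]; ring
      _ = _ := by rw [ENNReal.add_halves]
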